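/- For orthogonal projections P and Q on a complex Hilbert space, the geometric mean P # Q equals the projection P ∧ Q onto the intersection ran(P) ∩ ran(Q), and the harmonic mean P ! Q = 2(P : Q) also equals P ∧ Q. -/

import Mathlib

/-!
For `ε > 0` put `A = P + ε` and `B = Q + ε`. Both regularized means `X` (the geometric mean and
the parallel sum) are self-adjoint and satisfy `X B⁻¹ X ≤ A` and `X A⁻¹ X ≤ B`; for the geometric
mean these are the Riccati identities `X B⁻¹ X = A`, `X A⁻¹ X = B`. As `B ≤ 1 + ε`, this gives
`‖X η‖² ≤ (1 + ε) ⟪A η, η⟫ = (1 + ε) ε ‖η‖²` for `η ∈ ker P`, so the strong limit vanishes on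
`ker P` and likewise on `ker Q`. A self-adjoint operator vanishing there has its range in
`ran P ∩ ran Q = ran R`, hence is determined by its action on `ran R`. There `A = B = 1 + ε`, and
the two means act as the scalars `1 + ε` and `(1 + ε) / 2`.
-/

open Filter Topology

variable {H : Type*} [NormedAddCommGroup H] [InnerProductSpace ℂ H] [CompleteSpace H]

/-- The square root of a (positive) bounded operator, via the continuous functional
calculus. -/
noncomputable def opSqrt (A : H →L[ℂ] H) : H →L[ℂ] H := cfc Real.sqrt A

/-- The geometric mean `A # B = A^{1/2}(A^{-1/2} B A^{-1/2})^{1/2} A^{1/2}` of invertible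
positive operators. -/
noncomputable def gmInv (A B : H →L[ℂ] H) : H →L[ℂ] H :=
  opSqrt A * opSqrt (Ring.inverse (opSqrt A) * B * Ring.inverse (opSqrt A)) * opSqrt A

/-- The parallel sum `(A⁻¹ + B⁻¹)⁻¹` of invertible positive operators. -/
noncomputable def psInv (A B : H →L[ℂ] H) : H →L[ℂ] H :=
  Ring.inverse (Ring.inverse A + Ring.inverse B)

open scoped Ring InnerProductSpace

lemma inverse_smul_one {𝕜 R : Type*} [Field 𝕜] [Ring R] [Algebra 𝕜 R] {c : 𝕜} (hc : c ≠ 0) :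
    (c • (1 : R))⁻¹ʳ = c⁻¹ • 1 := by
  have hu : IsUnit (c • (1 : R)) := by
    rw [← Algebra.algebraMap_eq_smul_one]; exact (IsUnit.mk0 c hc).map _
  simpa using (Ring.inverse_mul_eq_iff_eq_mul _ 1 (c⁻¹ • 1) hu).2 (by simp [smul_smul, hc])

section CStarAlgebra

variable {A : Type*} [CStarAlgebra A] [PartialOrder A] [StarOrderedRing A]

lemma isStrictlyPositive_add_smul_one {a : A} (ha : 0 ≤ a) {ε : ℝ} (hε : 0 < ε) :
    IsStrictlyPositive (a + ε • 1) :=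
  (isStrictlyPositive_one.smul hε).nonneg_add ha

lemma add_smul_one_le {a : A} (ha : a ≤ 1) (ε : ℝ) : a + ε • 1 ≤ (1 + ε) • (1 : A) := by
  rw [add_smul, one_smul]
  exact add_le_add_left ha _

end CStarAlgebra

lemma inverse_apply_of_apply_eq {E : Type*} [NormedAddCommGroup E] [NormedSpace ℂ E]
    {T : E →L[ℂ] E} (hT : IsUnit T) {c : ℝ} (hc : c ≠ 0) {ξ : E} (h : T ξ = c • ξ) :
    T⁻¹ʳ ξ = c⁻¹ • ξ := by
  have h' : c • T⁻¹ʳ ξ = ξ := by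
    rw [← ContinuousLinearMap.map_smul_of_tower, ← h, ← mul_apply_eq_comp,
      Ring.inverse_mul_cancel T hT, one_apply_eq_self]
  rw [← inv_smul_smul₀ hc (T⁻¹ʳ ξ), h']

lemma re_inner_apply_le_of_le {𝕜 E : Type*} [RCLike 𝕜] [NormedAddCommGroup E]
    [InnerProductSpace 𝕜 E] [CompleteSpace E] {S T : E →L[𝕜] E} (h : S ≤ T) (x : E) :
    RCLike.re ⟪S x, x⟫_𝕜 ≤ RCLike.re ⟪T x, x⟫_𝕜 := by
  simpa [inner_sub_left] using ((ContinuousLinearMap.le_def S T).1 h).re_inner_nonneg_left x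

lemma IsIdempotentElem.apply_of_mem_range {R M : Type*} [Semiring R] [AddCommMonoid M]
    [Module R M] [TopologicalSpace M] {p : M →L[R] M} (hp : IsIdempotentElem p) {x : M}
    (hx : x ∈ LinearMap.range (p : M →ₗ[R] M)) : p x = x := by
  obtain ⟨y, rfl⟩ := hx
  exact congr($hp.eq y)

section Projection

variable {𝕜 E : Type*} [RCLike 𝕜] [NormedAddCommGroup E] [InnerProductSpace 𝕜 E] [CompleteSpace E]
  {T P : E →L[𝕜] E}

lemma IsSelfAdjoint.ker_le_ker_iff_range_le_range (hT : IsSelfAdjoint T)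
    (hP : IsStarProjection P) :
    LinearMap.ker (P : E →ₗ[𝕜] E) ≤ LinearMap.ker (T : E →ₗ[𝕜] E) ↔
      LinearMap.range (T : E →ₗ[𝕜] E) ≤ LinearMap.range (P : E →ₗ[𝕜] E) := by
  have hPl := ContinuousLinearMap.IsIdempotentElem.toLinearMap hP.isIdempotentElem
  rw [← LinearMap.IsIdempotentElem.comp_eq_left_iff hPl,
    ← LinearMap.IsIdempotentElem.comp_eq_right_iff hPl, ← Module.End.mul_eq_comp,
    ← Module.End.mul_eq_comp, ← ContinuousLinearMap.toLinearMap_mul,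
    ← ContinuousLinearMap.toLinearMap_mul, ContinuousLinearMap.coe_inj,
    ContinuousLinearMap.coe_inj]
  constructor <;> intro h <;>
    simpa [hT.star_eq, hP.isSelfAdjoint.star_eq] using congr(star $h)

lemma eq_smul_of_ker_le_of_apply_eq {Q R : E →L[𝕜] E} {c : 𝕜} (hT : IsSelfAdjoint T)
    (hP : IsStarProjection P) (hQ : IsStarProjection Q) (hR : IsStarProjection R)
    (hRPQ : LinearMap.range (R : E →ₗ[𝕜] E) =
      LinearMap.range (P : E →ₗ[𝕜] E) ⊓ LinearMap.range (Q : E →ₗ[𝕜] E))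
    (hTP : LinearMap.ker (P : E →ₗ[𝕜] E) ≤ LinearMap.ker (T : E →ₗ[𝕜] E))
    (hTQ : LinearMap.ker (Q : E →ₗ[𝕜] E) ≤ LinearMap.ker (T : E →ₗ[𝕜] E))
    (hTR : ∀ x, T (R x) = c • R x) : T = c • R := by
  have hRT : LinearMap.ker (R : E →ₗ[𝕜] E) ≤ LinearMap.ker (T : E →ₗ[𝕜] E) :=
    (hT.ker_le_ker_iff_range_le_range hR).2 <| hRPQ ▸ le_inf
      ((hT.ker_le_ker_iff_range_le_range hP).1 hTP) ((hT.ker_le_ker_iff_range_le_range hQ).1 hTQ)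
  ext x
  have hker : T (x - R x) = 0 := hRT <| by
    simp [← mul_apply_eq_comp, hR.isIdempotentElem.eq]
  rw [map_sub, sub_eq_zero, hTR] at hker
  rw [hker, smul_apply]

end Projection

section Limits

variable {ι : Type*} {l : Filter ι} [l.NeBot]

lemma isSelfAdjoint_of_tendsto {𝕜 E : Type*} [RCLike 𝕜] [NormedAddCommGroup E]
    [InnerProductSpace 𝕜 E] [CompleteSpace E] {F : ι → E →L[𝕜] E} {T : E →L[𝕜] E}
    (hF : ∀ x, Tendsto (fun i => F i x) l (𝓝 (T x))) (hsa : ∀ᶠ i in l, IsSelfAdjoint (F i)) :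
    IsSelfAdjoint T := by
  rw [ContinuousLinearMap.isSelfAdjoint_iff_isSymmetric]
  intro x y
  refine tendsto_nhds_unique ((hF x).inner tendsto_const_nhds)
    ((tendsto_const_nhds.inner (hF y)).congr' ?_)
  filter_upwards [hsa] with i hi
  exact (hi.isSymmetric x y).symm

lemma eq_zero_of_tendsto_of_norm_sq_le {E : Type*} [NormedAddCommGroup E] {f : ι → E} {y : E}
    {g : ι → ℝ} (hf : Tendsto f l (𝓝 y)) (hg : Tendsto g l (𝓝 0))
    (h : ∀ᶠ i in l, ‖f i‖ ^ 2 ≤ g i) : y = 0 := by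
  have : ‖y‖ ^ 2 ≤ 0 := le_of_tendsto_of_tendsto (hf.norm.pow 2) hg h
  simpa using this

end Limits

variable {A B : H →L[ℂ] H}

lemma opSqrt_eq_sqrt (hA : 0 ≤ A) : opSqrt A = CFC.sqrt A := by
  rw [CFC.sqrt_eq_real_sqrt A, cfcₙ_eq_cfc, opSqrt]

lemma opSqrt_nonneg (A : H →L[ℂ] H) : 0 ≤ opSqrt A :=
  cfc_nonneg fun x _ => Real.sqrt_nonneg x

lemma opSqrt_mul_self (hA : 0 ≤ A) : opSqrt A * opSqrt A = A := by
  rw [opSqrt_eq_sqrt hA, CFC.sqrt_mul_sqrt_self A]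

lemma IsStrictlyPositive.opSqrt (hA : IsStrictlyPositive A) : IsStrictlyPositive (opSqrt A) := by
  rw [opSqrt_eq_sqrt hA.nonneg]; exact hA.sqrt

lemma opSqrt_apply_of_apply_eq (hA : 0 ≤ A) {c : ℝ} (hc : 0 < c) {ξ : H} (h : A ξ = c • ξ) :
    opSqrt A ξ = √c • ξ := by
  set X := opSqrt A
  have hu : IsUnit (X + √c • 1) :=
    (isStrictlyPositive_add_smul_one (opSqrt_nonneg A) (Real.sqrt_pos.2 hc)).isUnit
  have hker : (X + √c • 1) (X ξ - √c • ξ) = 0 := by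
    have hXX : X (X ξ) = c • ξ := by rw [← mul_apply_eq_comp, opSqrt_mul_self hA, h]
    simp only [add_apply, map_sub, ContinuousLinearMap.map_smul_of_tower, hXX, smul_apply,
      one_apply_eq_self, smul_smul, Real.mul_self_sqrt hc.le]
    abel
  rw [← sub_eq_zero]
  exact (ContinuousLinearMap.isUnit_iff_bijective.1 hu).injective (by rw [hker, map_zero])

section Riccati

variable {R : Type*} [MonoidWithZero R] {X Y B : R}

lemma riccati_solution_left (hX : IsUnit X) (hY : Y * Y = X⁻¹ʳ * B * X⁻¹ʳ) :
    X * Y * X * (X * X)⁻¹ʳ * (X * Y * X) = B := by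
  calc X * Y * X * (X * X)⁻¹ʳ * (X * Y * X) = X * (Y * Y) * X := by
        simp only [Ring.inverse_mul (.inl hX), mul_assoc, Ring.mul_inverse_cancel_left X _ hX,
          Ring.inverse_mul_cancel_left X _ hX]
    _ = B := by
        simp only [hY, mul_assoc, Ring.inverse_mul_cancel X hX, mul_one,
          Ring.mul_inverse_cancel_left X _ hX]

lemma riccati_solution_right (hX : IsUnit X) (hB : IsUnit B) (hY : Y * Y = X⁻¹ʳ * B * X⁻¹ʳ) :
    X * Y * X * B⁻¹ʳ * (X * Y * X) = X * X := by
  have hYu : IsUnit Y := ((Commute.refl Y).isUnit_mul_iff.1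
    (hY ▸ (hX.ringInverse.mul hB).mul hX.ringInverse)).1
  have hXBX : X * B⁻¹ʳ * X = Y⁻¹ʳ * Y⁻¹ʳ := by
    rw [← Ring.inverse_mul (.inl hYu), hY, Ring.inverse_mul (.inr hX.ringInverse),
      Ring.inverse_mul (.inl hX.ringInverse), Ring.inverse_inverse hX, mul_assoc]
  calc X * Y * X * B⁻¹ʳ * (X * Y * X) = X * Y * (X * B⁻¹ʳ * X) * Y * X := by
        simp only [mul_assoc]
    _ = X * X := by
        simp only [hXBX, mul_assoc, Ring.mul_inverse_cancel_left Y _ hYu,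
          Ring.inverse_mul_cancel_left Y _ hYu]

end Riccati

section GeometricMean

lemma gmInv_isSelfAdjoint (A B : H →L[ℂ] H) : IsSelfAdjoint (gmInv A B) := by
  have hX : IsSelfAdjoint (opSqrt A) := (opSqrt_nonneg A).isSelfAdjoint
  have h := (opSqrt_nonneg ((opSqrt A)⁻¹ʳ * B * (opSqrt A)⁻¹ʳ)).isSelfAdjoint.conjugate' (opSqrt A)
  rwa [hX.star_eq] at h

variable (hA : IsStrictlyPositive A) (hB : 0 ≤ B)
include hA hB

lemma opSqrt_inverse_conj_nonneg : 0 ≤ (opSqrt A)⁻¹ʳ * B * (opSqrt A)⁻¹ʳ :=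
  conjugate_nonneg_of_nonneg hB hA.opSqrt.ringInverse.nonneg

lemma gmInv_mul_inverse_mul_gmInv_left : gmInv A B * A⁻¹ʳ * gmInv A B = B := by
  have h := riccati_solution_left hA.opSqrt.isUnit
    (opSqrt_mul_self (opSqrt_inverse_conj_nonneg hA hB))
  rwa [opSqrt_mul_self hA.nonneg] at h

lemma gmInv_mul_inverse_mul_gmInv_right (hBu : IsUnit B) :
    gmInv A B * B⁻¹ʳ * gmInv A B = A := by
  have h := riccati_solution_right hA.opSqrt.isUnit hBu
    (opSqrt_mul_self (opSqrt_inverse_conj_nonneg hA hB))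
  rwa [opSqrt_mul_self hA.nonneg] at h

lemma gmInv_apply_of_apply_eq {c : ℝ} (hc : 0 < c) {ξ : H} (hAξ : A ξ = c • ξ)
    (hBξ : B ξ = c • ξ) : gmInv A B ξ = c • ξ := by
  have hXξ := opSqrt_apply_of_apply_eq hA.nonneg hc hAξ
  have hXinvξ := inverse_apply_of_apply_eq hA.opSqrt.isUnit (Real.sqrt_pos.2 hc).ne' hXξ
  have hMξ : ((opSqrt A)⁻¹ʳ * B * (opSqrt A)⁻¹ʳ) ξ = (1 : ℝ) • ξ := by
    simp only [mul_apply_eq_comp, hXinvξ, ContinuousLinearMap.map_smul_of_tower, hBξ, smul_smul]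
    congr 1
    field_simp
    exact (Real.sq_sqrt hc.le).symm
  have hYξ := opSqrt_apply_of_apply_eq (opSqrt_inverse_conj_nonneg hA hB) one_pos hMξ
  simp only [gmInv, mul_apply_eq_comp, hXξ, ContinuousLinearMap.map_smul_of_tower, hYξ,
    Real.sqrt_one, one_smul, smul_smul, Real.mul_self_sqrt hc.le]

end GeometricMean

omit [CompleteSpace H] in
lemma psInv_comm (A B : H →L[ℂ] H) : psInv A B = psInv B A := by
  rw [psInv, psInv, add_comm]

section ParallelSum

variable (hA : IsStrictlyPositive A) (hB : IsStrictlyPositive B)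
include hA hB

lemma isStrictlyPositive_inverse_add_inverse : IsStrictlyPositive (A⁻¹ʳ + B⁻¹ʳ) :=
  hA.ringInverse.add_nonneg hB.ringInverse.nonneg

lemma psInv_isSelfAdjoint : IsSelfAdjoint (psInv A B) :=
  (isStrictlyPositive_inverse_add_inverse hA hB).ringInverse.isSelfAdjoint

lemma psInv_mul_inverse_mul_psInv_le : psInv A B * B⁻¹ʳ * psInv A B ≤ A := by
  have hD := isStrictlyPositive_inverse_add_inverse hA hB
  calc psInv A B * B⁻¹ʳ * psInv A B ≤ psInv A B * (A⁻¹ʳ + B⁻¹ʳ) * psInv A B :=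
        (psInv_isSelfAdjoint hA hB).conjugate_le_conjugate
          (le_add_of_nonneg_left hA.ringInverse.nonneg)
    _ = psInv A B := by rw [psInv, Ring.inverse_mul_cancel _ hD.isUnit, one_mul]
    _ ≤ A := by
        have h := CStarAlgebra.ringInverse_le_ringInverse
          (le_add_of_nonneg_right hB.ringInverse.nonneg) hA.ringInverse
        rwa [Ring.inverse_inverse hA.isUnit] at h

lemma psInv_apply_of_apply_eq {c : ℝ} (hc : c ≠ 0) {ξ : H} (hAξ : A ξ = c • ξ)
    (hBξ : B ξ = c • ξ) : psInv A B ξ = (c / 2) • ξ := by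
  have hDξ : (A⁻¹ʳ + B⁻¹ʳ) ξ = (2 / c) • ξ := by
    rw [add_apply, inverse_apply_of_apply_eq hA.isUnit hc hAξ,
      inverse_apply_of_apply_eq hB.isUnit hc hBξ, ← add_smul]
    ring_nf
  rw [psInv, inverse_apply_of_apply_eq (isStrictlyPositive_inverse_add_inverse hA hB).isUnit
    (by positivity) hDξ, inv_div]

end ParallelSum

lemma norm_sq_apply_le_of_mul_inverse_mul_le {T : H →L[ℂ] H} {c : ℝ} (hc : 0 < c)
    (hT : IsSelfAdjoint T) (hB : IsStrictlyPositive B) (hBc : B ≤ c • 1)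
    (hTBT : T * B⁻¹ʳ * T ≤ A) (x : H) : ‖T x‖ ^ 2 ≤ c * RCLike.re ⟪A x, x⟫_ℂ := by
  have hinv : c⁻¹ • (1 : H →L[ℂ] H) ≤ B⁻¹ʳ := by
    simpa only [inverse_smul_one hc.ne'] using CStarAlgebra.ringInverse_le_ringInverse hBc hB
  have key : c⁻¹ * ‖T x‖ ^ 2 ≤ RCLike.re ⟪A x, x⟫_ℂ :=
    calc c⁻¹ * ‖T x‖ ^ 2 = RCLike.re ⟪(c⁻¹ • (1 : H →L[ℂ] H)) (T x), T x⟫_ℂ := by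
          simp [inner_self_eq_norm_sq_to_K, ← Complex.ofReal_pow]
      _ ≤ RCLike.re ⟪B⁻¹ʳ (T x), T x⟫_ℂ := re_inner_apply_le_of_le hinv _
      _ = RCLike.re ⟪(T * B⁻¹ʳ * T) x, x⟫_ℂ := by
          exact congrArg RCLike.re (hT.isSymmetric _ _).symm
      _ ≤ RCLike.re ⟪A x, x⟫_ℂ := re_inner_apply_le_of_le hTBT x
  calc ‖T x‖ ^ 2 = c * (c⁻¹ * ‖T x‖ ^ 2) := by field_simp
    _ ≤ c * RCLike.re ⟪A x, x⟫_ℂ := by gcongr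

lemma ker_le_ker_of_tendsto {P Q L : H →L[ℂ] H} {F : ℝ → H →L[ℂ] H} (hQ : IsStarProjection Q)
    (hF : ∀ x, Tendsto (fun ε => F ε x) (𝓝[>] 0) (𝓝 (L x)))
    (hsa : ∀ ε > 0, IsSelfAdjoint (F ε))
    (hFP : ∀ ε > 0, F ε * (Q + ε • 1)⁻¹ʳ * F ε ≤ P + ε • 1) :
    LinearMap.ker (P : H →ₗ[ℂ] H) ≤ LinearMap.ker (L : H →ₗ[ℂ] H) := by
  intro x (hx : P x = 0)
  refine eq_zero_of_tendsto_of_norm_sq_le (hF x) (g := fun ε => (1 + ε) * (ε * ‖x‖ ^ 2)) ?_ ?_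
  · exact ((by fun_prop : Continuous fun ε : ℝ => (1 + ε) * (ε * ‖x‖ ^ 2)).tendsto' 0 0
      (by simp)).mono_left nhdsWithin_le_nhds
  · filter_upwards [self_mem_nhdsWithin] with ε (hε : 0 < ε)
    have h := norm_sq_apply_le_of_mul_inverse_mul_le (by linarith) (hsa ε hε)
      (isStrictlyPositive_add_smul_one hQ.nonneg hε) (add_smul_one_le hQ.le_one ε) (hFP ε hε) x
    simpa [hx, inner_self_eq_norm_sq_to_K, ← Complex.ofReal_pow] using h

theorem eq_smul_of_tendsto {P Q R L : H →L[ℂ] H} {F : ℝ → H →L[ℂ] H} {c : ℝ}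
    (hP : IsStarProjection P) (hQ : IsStarProjection Q) (hR : IsStarProjection R)
    (hRPQ : LinearMap.range (R : H →ₗ[ℂ] H) =
      LinearMap.range (P : H →ₗ[ℂ] H) ⊓ LinearMap.range (Q : H →ₗ[ℂ] H))
    (hF : ∀ x, Tendsto (fun ε => F ε x) (𝓝[>] 0) (𝓝 (L x)))
    (hsa : ∀ ε > 0, IsSelfAdjoint (F ε))
    (hFP : ∀ ε > 0, F ε * (Q + ε • 1)⁻¹ʳ * F ε ≤ P + ε • 1)
    (hFQ : ∀ ε > 0, F ε * (P + ε • 1)⁻¹ʳ * F ε ≤ Q + ε • 1)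
    (hFR : ∀ ε > 0, ∀ ξ, P ξ = ξ → Q ξ = ξ → F ε ξ = (c * (1 + ε)) • ξ) :
    L = c • R := by
  rw [← Complex.coe_smul]
  refine eq_smul_of_ker_le_of_apply_eq
    (isSelfAdjoint_of_tendsto hF (eventually_nhdsWithin_of_forall hsa)) hP hQ hR hRPQ
    (ker_le_ker_of_tendsto hQ hF hsa hFP) (ker_le_ker_of_tendsto hP hF hsa hFQ) fun x => ?_
  have hRx : R x ∈ LinearMap.range (P : H →ₗ[ℂ] H) ⊓ LinearMap.range (Q : H →ₗ[ℂ] H) :=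
    hRPQ ▸ ⟨x, rfl⟩
  rw [Complex.coe_smul]
  refine tendsto_nhds_unique (hF (R x)) ?_
  refine (((by fun_prop : Continuous fun ε : ℝ => (c * (1 + ε)) • R x).tendsto' 0 _
    (by simp)).mono_left nhdsWithin_le_nhds).congr' ?_
  exact eventually_nhdsWithin_of_forall fun ε hε => (hFR ε hε _
    (hP.isIdempotentElem.apply_of_mem_range hRx.1)
    (hQ.isIdempotentElem.apply_of_mem_range hRx.2)).symm

section Means

variable {P Q R : H →L[ℂ] H} (hP : IsStarProjection P) (hQ : IsStarProjection Q)
  (hR : IsStarProjection R)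
  (hRPQ : LinearMap.range (R : H →ₗ[ℂ] H) =
    LinearMap.range (P : H →ₗ[ℂ] H) ⊓ LinearMap.range (Q : H →ₗ[ℂ] H))
include hP hQ hR hRPQ

theorem eq_of_tendsto_gmInv_add_smul_one {G : H →L[ℂ] H}
    (hG : ∀ ξ, Tendsto (fun ε : ℝ => gmInv (P + ε • 1) (Q + ε • 1) ξ) (𝓝[>] 0) (𝓝 (G ξ))) :
    G = R := by
  have hA := fun ε (hε : 0 < ε) => isStrictlyPositive_add_smul_one hP.nonneg hε
  have hB := fun ε (hε : 0 < ε) => isStrictlyPositive_add_smul_one hQ.nonneg hε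
  simpa using eq_smul_of_tendsto (c := 1) hP hQ hR hRPQ hG (fun _ _ => gmInv_isSelfAdjoint _ _)
    (fun ε hε => (gmInv_mul_inverse_mul_gmInv_right (hA ε hε) (hB ε hε).nonneg
      (hB ε hε).isUnit).le)
    (fun ε hε => (gmInv_mul_inverse_mul_gmInv_left (hA ε hε) (hB ε hε).nonneg).le)
    fun ε hε ξ hPξ hQξ => by
      rw [one_mul]
      exact gmInv_apply_of_apply_eq (hA ε hε) (hB ε hε).nonneg (by linarith)
        (by simp [hPξ, add_smul]) (by simp [hQξ, add_smul])

theorem two_smul_eq_of_tendsto_psInv_add_smul_one {S : H →L[ℂ] H}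
    (hS : ∀ ξ, Tendsto (fun ε : ℝ => psInv (P + ε • 1) (Q + ε • 1) ξ) (𝓝[>] 0) (𝓝 (S ξ))) :
    (2 : ℝ) • S = R := by
  have hA := fun ε (hε : 0 < ε) => isStrictlyPositive_add_smul_one hP.nonneg hε
  have hB := fun ε (hε : 0 < ε) => isStrictlyPositive_add_smul_one hQ.nonneg hε
  have h := eq_smul_of_tendsto (c := 1 / 2) hP hQ hR hRPQ hS
    (fun ε hε => psInv_isSelfAdjoint (hA ε hε) (hB ε hε))
    (fun ε hε => psInv_mul_inverse_mul_psInv_le (hA ε hε) (hB ε hε))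
    (fun ε hε => psInv_comm (Q + ε • 1) _ ▸ psInv_mul_inverse_mul_psInv_le (hB ε hε) (hA ε hε))
    fun ε hε ξ hPξ hQξ => by
      rw [one_div_mul_eq_div]
      exact psInv_apply_of_apply_eq (hA ε hε) (hB ε hε) (by linarith)
        (by simp [hPξ, add_smul]) (by simp [hQξ, add_smul])
  rw [h, smul_smul]
  norm_num

end Means

/-- for orthogonal projections `P, Q` on a complex Hilbert space, the
geometric mean `P # Q` (strong limit of `(P+εI)#(Q+εI)`) equals the orthogonal projection
`P ∧ Q` onto `ran(P) ∩ ran(Q)`, and the harmonic mean `P ! Q = 2(P : Q)` (with `P : Q` the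
strong limit of `((P+εI)⁻¹+(Q+εI)⁻¹)⁻¹`) also equals `P ∧ Q`. -/
theorem proj_geom_and_harmonic_mean (P Q R G S : H →L[ℂ] H)
    (hPsa : IsSelfAdjoint P) (hPidem : IsIdempotentElem P)
    (hQsa : IsSelfAdjoint Q) (hQidem : IsIdempotentElem Q)
    (hRsa : IsSelfAdjoint R) (hRidem : IsIdempotentElem R)
    (hRrange : LinearMap.range (R : H →ₗ[ℂ] H) =
      LinearMap.range (P : H →ₗ[ℂ] H) ⊓ LinearMap.range (Q : H →ₗ[ℂ] H))
    (hG : ∀ ξ : H, Tendsto (fun ε : ℝ => gmInv (P + ε • 1) (Q + ε • 1) ξ)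
      (𝓝[>] (0 : ℝ)) (𝓝 (G ξ)))
    (hS : ∀ ξ : H, Tendsto (fun ε : ℝ => psInv (P + ε • 1) (Q + ε • 1) ξ)
      (𝓝[>] (0 : ℝ)) (𝓝 (S ξ))) :
    G = R ∧ (2 : ℝ) • S = R :=
  ⟨eq_of_tendsto_gmInv_add_smul_one ⟨hPidem, hPsa⟩ ⟨hQidem, hQsa⟩ ⟨hRidem, hRsa⟩ hRrange hG,
    two_smul_eq_of_tendsto_psInv_add_smul_one ⟨hPidem, hPsa⟩ ⟨hQidem, hQsa⟩ ⟨hRidem, hRsa⟩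
      hRrange hS⟩
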